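/- For every H > 0 and every ε > 0 there exists a constant C = C(H, ε) > 0 with the following property: whenever (X, d) is a metric space, τ > 0, ν is a Borel probability measure on X satisfying the Gaussian moment-generating bound at scale τ, and z ∈ X satisfies ∫_X d(z, x)² dν(x) ≤ Hτ, then for every L > 0 one has ν({x ∈ X : d(x, z) ≥ L}) ≤ C · exp(−L²/((4+ε)τ)). -/

import Mathlib

open MeasureTheory
open scoped ENNReal

universe u

/-!
Truncate the distance at level `L`: `f = min (d(·, z)) L` is 1-Lipschitz and bounded, and by
Jensen its mean `m` satisfies `m² ≤ Hτ`. Chernoff's bound at `λ = (L - m) / (2τ)` gives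
`ν {f ≥ L} ≤ exp (-(L - m)² / (4τ))`, and the two-term Cauchy–Schwarz inequality
`L² / (4 + ε) ≤ (L - m)² / 4 + m² / ε` trades the unknown shift `m` for the factor `exp (H / ε)`.
-/

def HasGaussianMGFBound {X : Type*} [PseudoMetricSpace X] [MeasurableSpace X] (ν : Measure X)
    (τ : ℝ) : Prop :=
  ∀ h : X → ℝ, LipschitzWith 1 h → (∃ M : ℝ, ∀ x, |h x| ≤ M) →
    (∫ x, h x ∂ν) = 0 → ∀ l : ℝ, 0 < l → ∫ x, Real.exp (l * h x) ∂ν ≤ Real.exp (τ * l ^ 2)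

theorem add_sq_div_add_le {a b p q : ℝ} (hp : 0 < p) (hq : 0 < q) :
    (a + b) ^ 2 / (p + q) ≤ a ^ 2 / p + b ^ 2 / q := by
  rw [div_add_div _ _ hp.ne' hq.ne', div_le_div_iff₀ (by positivity) (by positivity)]
  nlinarith [sq_nonneg (a * q - b * p), mul_pos hp hq]

theorem sq_integral_le_integral_sq {Ω : Type*} [MeasurableSpace Ω] {μ : Measure Ω}
    [IsProbabilityMeasure μ] {f : Ω → ℝ} (hf : MemLp f 2 μ) :
    (∫ x, f x ∂μ) ^ 2 ≤ ∫ x, f x ^ 2 ∂μ := by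
  have hvar := ProbabilityTheory.variance_nonneg f μ
  rw [ProbabilityTheory.variance_eq_sub hf] at hvar
  simpa using hvar

section

variable {X : Type*} [PseudoMetricSpace X] [MeasurableSpace X] {ν : Measure X}

theorem integral_sq_le_of_abs_le_dist {f : X → ℝ} {z : X} (hf : ∀ x, |f x| ≤ dist z x) {c : ℝ}
    (hc : 0 ≤ c) (hz : ∫⁻ x, edist z x ^ 2 ∂ν ≤ ENNReal.ofReal c) :
    ∫ x, f x ^ 2 ∂ν ≤ c := by
  rw [← ENNReal.ofReal_le_ofReal_iff hc,
    ← abs_of_nonneg (integral_nonneg fun x => sq_nonneg (f x)), ← Real.enorm_eq_ofReal_abs]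
  refine (enorm_integral_le_lintegral_enorm _).trans ((lintegral_mono fun x => ?_).trans hz)
  rw [enorm_pow, Real.enorm_eq_ofReal_abs, edist_dist]
  gcongr
  exact hf x

theorem sq_integral_le_of_abs_le_dist [IsProbabilityMeasure ν] [OpensMeasurableSpace X]
    {f : X → ℝ} (hf_cont : Continuous f) {z : X} (hf : ∀ x, |f x| ≤ dist z x) {M : ℝ}
    (hM : ∀ x, |f x| ≤ M) {c : ℝ} (hc : 0 ≤ c)
    (hz : ∫⁻ x, edist z x ^ 2 ∂ν ≤ ENNReal.ofReal c) :
    (∫ x, f x ∂ν) ^ 2 ≤ c :=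
  (sq_integral_le_integral_sq (MemLp.of_bound hf_cont.aestronglyMeasurable M
    (ae_of_all _ hM))).trans (integral_sq_le_of_abs_le_dist hf hc hz)

theorem HasGaussianMGFBound.measureReal_integral_add_le [IsProbabilityMeasure ν]
    [OpensMeasurableSpace X] {τ : ℝ} (hν : HasGaussianMGFBound ν τ) (hτ : 0 < τ)
    {h : X → ℝ} (hlip : LipschitzWith 1 h) {M : ℝ} (hM : ∀ x, |h x| ≤ M) {a : ℝ} (ha : 0 < a) :
    ν.real {x | ∫ y, h y ∂ν + a ≤ h x} ≤ Real.exp (-a ^ 2 / (4 * τ)) := by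
  set m := ∫ y, h y ∂ν
  set g : X → ℝ := fun x => h x - m
  have hg_lip : LipschitzWith 1 g := by simpa using hlip.sub (LipschitzWith.const m)
  have hg_bdd : ∀ x, |g x| ≤ M + |m| := fun x => (abs_sub _ _).trans (by gcongr; exact hM x)
  have hg_mean : ∫ x, g x ∂ν = 0 := by
    rw [integral_sub (Integrable.of_bound hlip.continuous.aestronglyMeasurable M (ae_of_all _ hM))
      (integrable_const m)]
    simp [m]
  set l := a / (2 * τ)
  have hl : 0 < l := by positivity
  have hexp_int : Integrable (fun x => Real.exp (l * g x)) ν := by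
    refine Integrable.of_bound
      (Real.continuous_exp.comp (continuous_const.mul hg_lip.continuous)).aestronglyMeasurable (Real.exp (l * (M + |m|))) (ae_of_all _ fun x => ?_)
    rw [Real.norm_eq_abs, Real.abs_exp, Real.exp_le_exp]
    exact mul_le_mul_of_nonneg_left (le_of_abs_le (hg_bdd x)) hl.le
  calc ν.real {x | m + a ≤ h x} = ν.real {x | a ≤ g x} := by
        simp only [g, le_sub_iff_add_le']
    _ ≤ Real.exp (-l * a) * ProbabilityTheory.mgf g ν l :=
        ProbabilityTheory.measure_ge_le_exp_mul_mgf a hl.le hexp_int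
    _ ≤ Real.exp (-l * a) * Real.exp (τ * l ^ 2) := by
        gcongr
        exact hν g hg_lip ⟨_, hg_bdd⟩ hg_mean l hl
    _ = Real.exp (-a ^ 2 / (4 * τ)) := by
        rw [← Real.exp_add]
        congr 1
        simp only [l]
        field_simp
        ring

end

/-- For every `H > 0` and `ε > 0` there is a constant `C = C(H, ε) > 0` such that:
for any metric space `X`, any `τ > 0`, any Borel probability measure `ν` on `X`
satisfying the Gaussian moment-generating bound at scale `τ`, and any `z ∈ X` with
`∫ d(z,·)² dν ≤ Hτ`, one has `ν({d(·,z) ≥ L}) ≤ C·exp(−L²/((4+ε)τ))` for every `L > 0`. -/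
theorem stmt4 (H ε : ℝ) (hH : 0 < H) (hε : 0 < ε) :
    ∃ C : ℝ, 0 < C ∧
      ∀ (X : Type u) [MetricSpace X] [MeasurableSpace X] [BorelSpace X]
        (τ : ℝ), 0 < τ → ∀ ν : Measure X, IsProbabilityMeasure ν →
        (∀ h : X → ℝ, LipschitzWith 1 h → (∃ M : ℝ, ∀ x, |h x| ≤ M) →
          (∫ x, h x ∂ν) = 0 → ∀ l : ℝ, 0 < l →
            ∫ x, Real.exp (l * h x) ∂ν ≤ Real.exp (τ * l ^ 2)) →
        ∀ z : X, (∫⁻ x, edist z x ^ 2 ∂ν ≤ ENNReal.ofReal (H * τ)) →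
        ∀ L : ℝ, 0 < L →
          ν {x | L ≤ dist x z} ≤
            ENNReal.ofReal (C * Real.exp (-(L ^ 2) / ((4 + ε) * τ))) := by
  refine ⟨Real.exp (H / ε), Real.exp_pos _, ?_⟩
  rintro X _ _ _ τ hτ ν _ (hν : HasGaussianMGFBound ν τ) z hz L hL
  set f : X → ℝ := fun x => min (dist x z) L
  have hf_lip : LipschitzWith 1 f := (LipschitzWith.dist_left z).min_const L
  have hf_abs (x : X) : |f x| = min (dist z x) L := by
    rw [abs_of_nonneg (le_min dist_nonneg hL.le), dist_comm]
  set m := ∫ x, f x ∂ν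
  have hm : m ^ 2 ≤ H * τ :=
    sq_integral_le_of_abs_le_dist hf_lip.continuous (fun x => (hf_abs x).trans_le (min_le_left _ _))
      (fun x => (hf_abs x).trans_le (min_le_right _ _)) (by positivity) hz
  set a := max (L - m) 0
  have htail : ν.real {x | L ≤ dist x z} ≤ Real.exp (-a ^ 2 / (4 * τ)) := by
    rcases le_or_gt L m with hLm | hmL
    · simp [a, max_eq_right (sub_nonpos.2 hLm), measureReal_le_one]
    · rw [show a = L - m from max_eq_left (sub_nonneg.2 hmL.le)]
      refine (measureReal_mono fun x (hx : L ≤ dist x z) => ?_).trans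
        (hν.measureReal_integral_add_le hτ hf_lip (fun x => (hf_abs x).trans_le (min_le_right _ _))
          (sub_pos.2 hmL))
      simp [f, m, hx]
  have hexponent : L ^ 2 / ((4 + ε) * τ) ≤ a ^ 2 / (4 * τ) + H / ε :=
    calc L ^ 2 / ((4 + ε) * τ) ≤ (a + m) ^ 2 / (4 * τ + ε * τ) := by
          rw [← add_mul]
          gcongr
          simp only [a, max_add, sub_add_cancel, zero_add, le_max_left]
      _ ≤ a ^ 2 / (4 * τ) + m ^ 2 / (ε * τ) := add_sq_div_add_le (by positivity) (by positivity)
      _ ≤ a ^ 2 / (4 * τ) + H / ε := by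
          gcongr a ^ 2 / (4 * τ) + ?_
          rw [div_le_div_iff₀ (by positivity) hε]
          nlinarith
  rw [ENNReal.le_ofReal_iff_toReal_le (measure_ne_top _ _) (by positivity), ← Real.exp_add]
  refine htail.trans (Real.exp_le_exp.2 ?_)
  rw [neg_div, neg_div]
  linarith
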